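/- arXiv:2112.14729 — 6 statements merged into one kernel-verified Lean document; each statement's English description precedes it below -/
import Mathlib

section
/- Let n ≥ 1 and let P be a complex polynomial of degree n all of whose roots lie on the unit circle {z ∈ ℂ : |z| = 1}. Then 𝒟ₙ P is a polynomial of degree n and all roots of 𝒟ₙ P also lie on the unit circle. (Analogue of Rolle's theorem for polynomials with roots on the unit circle.) -/
/-!
At a point `z` with `P z ≠ 0`, `z P'(z) / P(z) = ∑ₐ z / (z - a)` over the roots `a` of `P`, so
`𝒟ₙ P (z) = 0` amounts to `∑ₐ (z + a) / (z - a) = 2 z P'(z) / P(z) - n = 0`. For `|a| = 1` the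
real part of `(z + a) / (z - a)` is `(|z|² - 1) / |z - a|²`, so the real part of the sum is
`|z|² - 1` times a positive number, which forces `|z| = 1`.
The degree claim holds because `X P' - c P` multiplies the `k`-th coefficient of `P` by `k - c`.
-/

/-- The differential operator `𝒟ₙ` acting on complex polynomials:
`(𝒟ₙ P)(z) = i·(z·P'(z) − (n/2)·P(z))`. -/
noncomputable def Dop (n : ℕ) (P : Polynomial ℂ) : Polynomial ℂ :=
  Polynomial.C Complex.I *
    (Polynomial.X * Polynomial.derivative P - Polynomial.C ((n : ℂ) / 2) * P)

open Polynomial Complex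

section EulerOperator

variable {R : Type*} [CommRing R] (p : R[X]) (c : R)

theorem coeff_X_mul_derivative (k : ℕ) : (X * derivative p).coeff k = k * p.coeff k := by
  cases k with
  | zero => simp
  | succ m => rw [coeff_X_mul, coeff_derivative, mul_comm]; push_cast; rfl

theorem coeff_X_mul_derivative_sub_C_mul (k : ℕ) :
    (X * derivative p - C c * p).coeff k = (k - c) * p.coeff k := by
  rw [coeff_sub, coeff_X_mul_derivative, coeff_C_mul, sub_mul]

theorem natDegree_X_mul_derivative_sub_C_mul [NoZeroDivisors R] (h : (p.natDegree : R) ≠ c) :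
    (X * derivative p - C c * p).natDegree = p.natDegree := by
  by_cases hp : p = 0
  · simp [hp]
  refine natDegree_eq_of_le_of_coeff_ne_zero ?_ ?_
  · refine natDegree_le_iff_coeff_eq_zero.2 fun k hk => ?_
    rw [coeff_X_mul_derivative_sub_C_mul, coeff_eq_zero_of_natDegree_lt hk, mul_zero]
  · rw [coeff_X_mul_derivative_sub_C_mul]
    exact mul_ne_zero (sub_ne_zero.2 h) (leadingCoeff_ne_zero.2 hp)

end EulerOperator

theorem re_add_div_sub (z a : ℂ) :
    ((z + a) / (z - a)).re = (normSq z - normSq a) / normSq (z - a) := by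
  rw [div_re, ← add_div]
  congr 1
  simp only [normSq_apply, add_re, sub_re, add_im, sub_im]
  ring

theorem sum_add_div_sub_eq {s : Multiset ℂ} {z : ℂ} (hz : z ∉ s) :
    (s.map fun a => (z + a) / (z - a)).sum = 2 * z * (s.map fun a => 1 / (z - a)).sum - s.card := by
  have hterm : ∀ a ∈ s, (z + a) / (z - a) = 2 * z * (1 / (z - a)) - 1 := fun a ha => by
    have : z - a ≠ 0 := sub_ne_zero.2 (ne_of_mem_of_not_mem ha hz).symm
    field_simp
    ring
  rw [Multiset.map_congr rfl hterm, Multiset.sum_map_sub, Multiset.sum_map_mul_left]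
  simp

theorem norm_eq_one_of_sum_add_div_sub_eq_zero {s : Multiset ℂ} {z : ℂ} (hs : s ≠ 0)
    (hs1 : ∀ a ∈ s, ‖a‖ = 1) (h : (s.map fun a => (z + a) / (z - a)).sum = 0) : ‖z‖ = 1 := by
  by_cases hzs : z ∈ s
  · exact hs1 z hzs
  have hre : (s.map fun a => (z + a) / (z - a)).sum.re
      = (normSq z - 1) * (s.map fun a => (normSq (z - a))⁻¹).sum := by
    rw [← coe_reAddGroupHom, map_multiset_sum, Multiset.map_map, ← Multiset.sum_map_mul_left]
    refine congrArg Multiset.sum (Multiset.map_congr rfl fun a ha => ?_)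
    rw [Function.comp_apply, coe_reAddGroupHom, re_add_div_sub, normSq_eq_norm_sq a, hs1 a ha]
    ring
  have hpos : 0 < (s.map fun a => (normSq (z - a))⁻¹).sum := by
    simpa using Multiset.sum_lt_sum_of_nonempty (f := fun _ => (0 : ℝ))
      (Multiset.empty_eq_zero.symm ▸ hs)
      fun a ha => inv_pos.2 (normSq_pos.2 (sub_ne_zero.2 (ne_of_mem_of_not_mem ha hzs).symm))
  rw [h, zero_re, eq_comm, mul_eq_zero, sub_eq_zero, or_iff_left hpos.ne', normSq_eq_norm_sq] at hre
  exact (pow_eq_one_iff_of_nonneg (norm_nonneg z) two_ne_zero).1 hre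

theorem stmt1 (n : ℕ) (hn : 1 ≤ n) (P : Polynomial ℂ) (hdeg : P.natDegree = n)
    (hroots : ∀ z : ℂ, P.eval z = 0 → ‖z‖ = 1) :
    (Dop n P).natDegree = n ∧ ∀ z : ℂ, (Dop n P).eval z = 0 → ‖z‖ = 1 := by
  refine ⟨?_, fun z hz => ?_⟩
  · have hn0 : (n : ℂ) ≠ 0 := Nat.cast_ne_zero.2 (by omega)
    have hhalf : (n : ℂ) ≠ n / 2 := fun h => hn0 (by linear_combination 2 * h)
    rw [Dop, natDegree_C_mul I_ne_zero,
      natDegree_X_mul_derivative_sub_C_mul _ _ (hdeg ▸ hhalf), hdeg]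
  by_cases hPz : P.eval z = 0
  · exact hroots z hPz
  have hsplit : P.Splits := IsAlgClosed.splits P
  have hlogDeriv : z * (P.roots.map fun a => 1 / (z - a)).sum = n / 2 := by
    rw [Dop, eval_mul, eval_C, mul_eq_zero, or_iff_right I_ne_zero, eval_sub, eval_mul, eval_X,
      hsplit.eval_derivative_eq_eval_mul_sum hPz, eval_mul, eval_C] at hz
    exact mul_left_cancel₀ hPz (by linear_combination hz)
  refine norm_eq_one_of_sum_add_div_sub_eq_zero (s := P.roots) ?_ ?_ ?_
  · exact hsplit.roots_ne_zero (by omega)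
  · exact fun a ha => hroots a (isRoot_of_mem_roots ha)
  · rw [sum_add_div_sub_eq fun h => hPz (isRoot_of_mem_roots h), mul_assoc, hlogDeriv,
      splits_iff_card_roots.1 hsplit, hdeg]
    ring
end

section
/- For all n ∈ ℕ, all k ∈ ℕ, and every complex polynomial P of degree at most n, the k-fold iterate of 𝒟ₙ applied to P equals the finite free multiplicative convolution of P with the circular Laguerre polynomial: 𝒟ₙᵏ P = P ⊠ₙ L_{n,k}. -/
/-- The finite free multiplicative convolution `⊠ₙ` of two polynomials of degree at most `n`:
`(p ⊠ₙ q)(z) = ∑_{j=0}^n (−1)^{n−j} (α_j β_j / C(n,j)) z^j`. -/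
noncomputable def ffmc (n : ℕ) (p q : Polynomial ℂ) : Polynomial ℂ :=
  ∑ j ∈ Finset.range (n + 1),
    Polynomial.C ((-1) ^ (n - j) * p.coeff j * q.coeff j / (n.choose j : ℂ)) * Polynomial.X ^ j

/-- The circular Laguerre polynomial
`L_{n,k}(z) = i^k ∑_{j=0}^n (−1)^{n−j} C(n,j) (j − n/2)^k z^j`. -/
noncomputable def circLaguerre (n k : ℕ) : Polynomial ℂ :=
  ∑ j ∈ Finset.range (n + 1),
    Polynomial.C (Complex.I ^ k * (-1) ^ (n - j) * (n.choose j : ℂ) * ((j : ℂ) - n / 2) ^ k) *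
      Polynomial.X ^ j

lemma Dop_coeff (n : ℕ) (Q : Polynomial ℂ) (j : ℕ) :
    (Dop n Q).coeff j = Complex.I * ((j : ℂ) - n / 2) * Q.coeff j := by
  simp only [Dop, Polynomial.coeff_C_mul, Polynomial.coeff_sub]
  rcases j with _ | j
  · simp
    ring
  · rw [Polynomial.coeff_X_mul, Polynomial.coeff_derivative]
    push_cast
    ring

lemma iter_coeff (n k : ℕ) (P : Polynomial ℂ) (j : ℕ) :
    ((Dop n)^[k] P).coeff j = (Complex.I * ((j : ℂ) - n / 2)) ^ k * P.coeff j := by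
  induction k with
  | zero => simp
  | succ k ih =>
    rw [Function.iterate_succ_apply', Dop_coeff, ih]
    ring

lemma ffmc_coeff (n : ℕ) (p q : Polynomial ℂ) (m : ℕ) :
    (ffmc n p q).coeff m =
      if m ≤ n then (-1) ^ (n - m) * p.coeff m * q.coeff m / (n.choose m : ℂ) else 0 := by
  rw [ffmc, Polynomial.finset_sum_coeff]
  simp only [Polynomial.coeff_C_mul, Polynomial.coeff_X_pow, mul_ite, mul_one, mul_zero]
  rw [Finset.sum_ite_eq (Finset.range (n + 1))]
  simp [Nat.lt_succ_iff]

lemma circLaguerre_coeff (n k m : ℕ) (hm : m ≤ n) :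
    (circLaguerre n k).coeff m =
      Complex.I ^ k * (-1) ^ (n - m) * (n.choose m : ℂ) * ((m : ℂ) - n / 2) ^ k := by
  rw [circLaguerre, Polynomial.finset_sum_coeff]
  simp only [Polynomial.coeff_C_mul, Polynomial.coeff_X_pow, mul_ite, mul_one, mul_zero]
  rw [Finset.sum_ite_eq (Finset.range (n + 1))]
  simp [Nat.lt_succ_iff, hm]

theorem stmt2 (n k : ℕ) (P : Polynomial ℂ) (hP : P.natDegree ≤ n) :
    (Dop n)^[k] P = ffmc n P (circLaguerre n k) := by
  ext m
  rw [iter_coeff, ffmc_coeff]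
  by_cases hm : m ≤ n
  · rw [if_pos hm, circLaguerre_coeff n k m hm]
    have hc : (n.choose m : ℂ) ≠ 0 := Nat.cast_ne_zero.mpr (Nat.choose_pos hm).ne'
    have hsq : ((-1 : ℂ)) ^ (n - m) * (-1) ^ (n - m) = 1 := by
      rw [← mul_pow]; norm_num
    rw [eq_div_iff hc, mul_pow]
    linear_combination (-(Complex.I ^ k * ((m : ℂ) - n / 2) ^ k * P.coeff m *
      (n.choose m : ℂ))) * hsq
  · rw [if_neg hm]
    have : P.coeff m = 0 := Polynomial.coeff_eq_zero_of_natDegree_lt (lt_of_le_of_lt hP (by omega))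
    simp [this]
end

section
/- Fix t > 0. For every θ in the open upper half-plane ℍ, the equation ζ − t·tan ζ = θ has exactly one solution ζ in ℍ, and this solution is simple in the sense that cos²ζ ≠ t (equivalently, the derivative of ζ ↦ ζ − t·tan ζ does not vanish at the solution). -/
/-!
Solutions are the fixed points of `g z = θ + t tan z`. With `y = Im z > 0` one has
`tanh y ≤ Im (tan z) ≤ coth y`, so every fixed point in `ℍ`, and the image of the strip
`b ≤ Im z ≤ M` (`a = Im θ`, `b = a + t tanh a`, `M = a + t coth b`), lie in that strip.
On it `g` shrinks the hyperbolic quantity `|z - w|² / ((Im z - a)(Im w - a))` of the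
half-plane `Im z > a` by the factor `1 / cosh b`; with `y₁ = Im z`, `y₂ = Im w` this comes down to
`|sin (z - w)|² (y₁ - a)(y₂ - a) cosh b ≤ |z - w|² sinh y₁ cosh y₁ sinh y₂ cosh y₂`.
Iterating `g` therefore converges to a fixed point, which is unique. If moreover `cos² ζ = t`,
then `|cos ζ|² = t` and the imaginary part of the equation becomes
`Im ζ = Im θ + sinh (Im ζ) cosh (Im ζ)`, impossible since `sinh y cosh y ≥ y`.
-/

open Set Function Filter

namespace Real

theorem tanh_strictMono : StrictMono tanh := fun x y hxy => by
  by_contra! h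
  have := artanh_le_artanh (neg_one_lt_tanh y) (tanh_lt_one x) h
  rw [artanh_tanh, artanh_tanh] at this
  linarith

theorem tanh_pos {x : ℝ} (hx : 0 < x) : 0 < tanh x := by
  simpa using tanh_strictMono hx

theorem sinh_le_mul_cosh {x : ℝ} (hx : 0 ≤ x) : sinh x ≤ x * cosh x := by
  have hmono : MonotoneOn (fun y => y * cosh y - sinh y) (Ici 0) := by
    refine monotoneOn_of_hasDerivWithinAt_nonneg (convex_Ici 0) (by fun_prop)
      (fun y _ => (((hasDerivAt_id y).mul (hasDerivAt_cosh y)).sub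
        (hasDerivAt_sinh y)).hasDerivWithinAt) fun y hy => ?_
    rw [interior_Ici] at hy
    simp only [id, one_mul, add_sub_cancel_left]
    exact mul_nonneg (le_of_lt hy) (sinh_pos_iff.2 hy).le
  simpa using hmono self_mem_Ici (mem_Ici.2 hx) hx

theorem mul_sinh_le_mul_sinh {x y : ℝ} (hx : 0 < x) (hxy : x ≤ y) :
    y * sinh x ≤ x * sinh y := by
  have hmono : MonotoneOn (fun u => sinh u / u) (Ioi 0) := by
    refine monotoneOn_of_hasDerivWithinAt_nonneg (convex_Ioi 0)
      (fun u hu => (continuous_sinh.continuousAt.div continuousAt_id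
        (ne_of_gt hu)).continuousWithinAt)
      (fun u hu => ((hasDerivAt_sinh u).div (hasDerivAt_id u)
        (ne_of_gt (interior_subset hu))).hasDerivWithinAt) fun u hu => ?_
    rw [interior_Ioi] at hu
    have := sinh_le_mul_cosh (le_of_lt hu)
    simp only [id, mul_one]
    exact div_nonneg (by linarith) (sq_nonneg u)
  have := hmono hx (hx.trans_le hxy) hxy
  rwa [div_le_div_iff₀ hx (hx.trans_le hxy), mul_comm (sinh x), mul_comm (sinh y)] at this

theorem sinh_sq_mul_le {d y : ℝ} (hd : 0 ≤ d) (hdy : d ≤ y) :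
    sinh d ^ 2 * y ≤ d ^ 2 * (sinh y * cosh y) := by
  rcases hd.eq_or_lt with rfl | hd
  · simp
  have hdouble : y * (sinh d * cosh d) ≤ d * (sinh y * cosh y) := by
    have := mul_sinh_le_mul_sinh (by linarith : 0 < 2 * d) (by linarith : 2 * d ≤ 2 * y)
    rw [sinh_two_mul, sinh_two_mul] at this
    linarith
  have hs : 0 ≤ sinh d * y := mul_nonneg (sinh_nonneg_iff.2 hd.le) (hd.le.trans hdy)
  calc sinh d ^ 2 * y = sinh d * (sinh d * y) := by ring
    _ ≤ d * cosh d * (sinh d * y) := mul_le_mul_of_nonneg_right (sinh_le_mul_cosh hd.le) hs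
    _ = d * (y * (sinh d * cosh d)) := by ring
    _ ≤ d * (d * (sinh y * cosh y)) := mul_le_mul_of_nonneg_left hdouble hd.le
    _ = d ^ 2 * (sinh y * cosh y) := by ring

theorem sub_mul_cosh_le_sinh_mul_cosh {a b y : ℝ} (ha : 0 ≤ a) (hb : 0 ≤ b) (hby : b ≤ y) :
    (y - a) * cosh b ≤ sinh y * cosh y := by
  have hy : 0 ≤ y := hb.trans hby
  have hcosh : cosh b ≤ cosh y := cosh_le_cosh.2 (by rwa [abs_of_nonneg hb, abs_of_nonneg hy])
  exact mul_le_mul (by linarith [self_le_sinh_iff.2 hy]) hcosh (cosh_pos b).le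
    (sinh_nonneg_iff.2 hy)

end Real

namespace Complex

theorem sin_re (z : ℂ) : (sin z).re = Real.sin z.re * Real.cosh z.im := by
  rw [sin_eq]
  simp [← ofReal_sin, ← ofReal_cos, ← ofReal_sinh, ← ofReal_cosh]

theorem sin_im (z : ℂ) : (sin z).im = Real.cos z.re * Real.sinh z.im := by
  rw [sin_eq]
  simp [← ofReal_sin, ← ofReal_cos, ← ofReal_sinh, ← ofReal_cosh]

theorem cos_re (z : ℂ) : (cos z).re = Real.cos z.re * Real.cosh z.im := by
  rw [cos_eq]
  simp [← ofReal_sin, ← ofReal_cos, ← ofReal_sinh, ← ofReal_cosh]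

theorem cos_im (z : ℂ) : (cos z).im = -(Real.sin z.re * Real.sinh z.im) := by
  rw [cos_eq]
  simp [← ofReal_sin, ← ofReal_cos, ← ofReal_sinh, ← ofReal_cosh]

theorem normSq_sin (z : ℂ) : normSq (sin z) = Real.sin z.re ^ 2 + Real.sinh z.im ^ 2 := by
  rw [normSq_apply, sin_re, sin_im]
  linear_combination (Real.cosh_sq z.im) * Real.sin z.re ^ 2 +
    Real.sinh z.im ^ 2 * Real.sin_sq_add_cos_sq z.re

theorem normSq_cos (z : ℂ) : normSq (cos z) = Real.cos z.re ^ 2 + Real.sinh z.im ^ 2 := by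
  rw [normSq_apply, cos_re, cos_im]
  linear_combination (Real.cosh_sq z.im) * Real.cos z.re ^ 2 +
    Real.sinh z.im ^ 2 * Real.sin_sq_add_cos_sq z.re

theorem normSq_cos_pos {z : ℂ} (hz : z.im ≠ 0) : 0 < normSq (cos z) := by
  rw [normSq_cos]
  have : Real.sinh z.im ≠ 0 := by simpa using hz
  positivity

theorem tan_im (z : ℂ) : (tan z).im = Real.sinh z.im * Real.cosh z.im / normSq (cos z) := by
  rw [tan_eq_sin_div_cos, div_im, sin_re, sin_im, cos_re, cos_im, div_sub_div_same]
  congr 1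
  linear_combination (Real.sinh z.im * Real.cosh z.im) * Real.sin_sq_add_cos_sq z.re

theorem tan_sub_tan {z w : ℂ} (hz : cos z ≠ 0) (hw : cos w ≠ 0) :
    tan z - tan w = sin (z - w) / (cos z * cos w) := by
  rw [tan_eq_sin_div_cos, tan_eq_sin_div_cos, sin_sub]
  field_simp

theorem cos_ne_zero_of_im_ne_zero {z : ℂ} (hz : z.im ≠ 0) : cos z ≠ 0 :=
  normSq_pos.1 (normSq_cos_pos hz)

theorem tanh_im_le_tan_im {z : ℂ} (hz : 0 < z.im) : Real.tanh z.im ≤ (tan z).im := by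
  rw [tan_im, Real.tanh_eq_sinh_div_cosh, div_le_div_iff₀ (Real.cosh_pos _) (normSq_cos_pos hz.ne'),
    normSq_cos]
  have := Real.sinh_pos_iff.2 hz
  nlinarith [Real.cos_sq_le_one z.re, Real.cosh_sq z.im, mul_pos this (Real.cosh_pos z.im)]

theorem tan_im_le_inv_tanh_im {z : ℂ} (hz : 0 < z.im) : (tan z).im ≤ (Real.tanh z.im)⁻¹ := by
  have hs := Real.sinh_pos_iff.2 hz
  rw [tan_im, Real.tanh_eq_sinh_div_cosh, inv_div, div_le_div_iff₀ (normSq_cos_pos hz.ne') hs,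
    normSq_cos]
  nlinarith [sq_nonneg (Real.cos z.re), mul_pos hs (Real.cosh_pos z.im)]

theorem normSq_sin_sub_mul_le {a b : ℝ} {z w : ℂ} (ha : 0 ≤ a) (hab : a ≤ b) (hb : b ≤ w.im)
    (hwz : w.im ≤ z.im) :
    normSq (sin (z - w)) * ((z.im - a) * (w.im - a) * Real.cosh b) ≤
      normSq (z - w) * (Real.sinh z.im * Real.cosh z.im * (Real.sinh w.im * Real.cosh w.im)) := by
  set x := z.re - w.re
  set d := z.im - w.im
  have hw : 0 ≤ w.im := ha.trans (hab.trans hb)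
  have hz : 0 ≤ z.im := hw.trans hwz
  have hza : 0 ≤ z.im - a := by linarith
  have hsinhd : 0 ≤ Real.sinh d ^ 2 := sq_nonneg _
  have hz_le : z.im - a ≤ Real.sinh z.im * Real.cosh z.im := by
    simpa using Real.sub_mul_cosh_le_sinh_mul_cosh ha le_rfl hz
  have hre : Real.sin x ^ 2 * (z.im - a) ≤ x ^ 2 * (Real.sinh z.im * Real.cosh z.im) :=
    mul_le_mul Real.sin_sq_le_sq hz_le hza (sq_nonneg x)
  have him : Real.sinh d ^ 2 * (z.im - a) ≤ d ^ 2 * (Real.sinh z.im * Real.cosh z.im) :=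
    calc Real.sinh d ^ 2 * (z.im - a) ≤ Real.sinh d ^ 2 * z.im :=
          mul_le_mul_of_nonneg_left (by linarith) hsinhd
      _ ≤ d ^ 2 * (Real.sinh z.im * Real.cosh z.im) :=
          Real.sinh_sq_mul_le (by linarith) (by linarith)
  have hw_le : (w.im - a) * Real.cosh b ≤ Real.sinh w.im * Real.cosh w.im :=
    Real.sub_mul_cosh_le_sinh_mul_cosh ha (ha.trans hab) hb
  calc normSq (sin (z - w)) * ((z.im - a) * (w.im - a) * Real.cosh b)
      = ((Real.sin x ^ 2 + Real.sinh d ^ 2) * (z.im - a)) * ((w.im - a) * Real.cosh b) := by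
        rw [normSq_sin, sub_re, sub_im]; ring
    _ ≤ ((x ^ 2 + d ^ 2) * (Real.sinh z.im * Real.cosh z.im)) *
          (Real.sinh w.im * Real.cosh w.im) :=
        mul_le_mul (by linarith) hw_le
          (mul_nonneg (by linarith) (Real.cosh_pos b).le)
          (mul_nonneg (by positivity) (hza.trans hz_le))
    _ = normSq (z - w) * (Real.sinh z.im * Real.cosh z.im * (Real.sinh w.im * Real.cosh w.im)) := by
        rw [normSq_apply, sub_re, sub_im]; ring

theorem normSq_tan_sub_mul_le {a b : ℝ} {z w : ℂ} (ha : 0 ≤ a) (hab : a < b) (hz : b ≤ z.im)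
    (hw : b ≤ w.im) :
    normSq (tan z - tan w) * ((z.im - a) * (w.im - a) * Real.cosh b) ≤
      normSq (z - w) * ((tan z).im * (tan w).im) := by
  wlog hwz : w.im ≤ z.im generalizing z w
  · have := this hw hz (le_of_not_ge hwz)
    rwa [← normSq_neg, neg_sub, ← normSq_neg (w - z), neg_sub, mul_comm (w.im - a),
      mul_comm (tan w).im] at this
  have hb : 0 < b := ha.trans_lt hab
  have hNz := normSq_cos_pos (hb.trans_le hz).ne'
  have hNw := normSq_cos_pos (hb.trans_le hw).ne'
  rw [tan_sub_tan (normSq_pos.1 hNz) (normSq_pos.1 hNw), normSq_div, normSq_mul, tan_im, tan_im,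
    div_mul_eq_mul_div, div_mul_div_comm, mul_div_assoc']
  exact div_le_div_of_nonneg_right (normSq_sin_sub_mul_le ha hab.le hw hwz) (by positivity)

end Complex

section Gauge

variable {X : Type*} [MetricSpace X] {f : X → X} {S : Set X} {D : X → X → ℝ} {k : ℝ}

theorem exists_isFixedPt_of_gauge_contracting [CompleteSpace X] (hS : IsClosed S)
    (hfS : MapsTo f S S) (hf : ∀ x ∈ S, ContinuousAt f x) (hk₀ : 0 ≤ k) (hk : k < 1)
    (hfD : ∀ x ∈ S, ∀ y ∈ S, D (f x) (f y) ≤ k * D x y)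
    (hD : ∀ x ∈ S, ∀ y ∈ S, dist x y ^ 2 ≤ D x y) {x₀ : X} (hx₀ : x₀ ∈ S) :
    ∃ x ∈ S, IsFixedPt f x := by
  set u : ℕ → X := fun n => f^[n] x₀
  have hu : ∀ n, u n ∈ S := fun n => hfS.iterate n hx₀
  have hu_succ : ∀ n, u (n + 1) = f (u n) := fun n => iterate_succ_apply' f n x₀
  have hDu : ∀ n, D (u n) (u (n + 1)) ≤ k ^ n * D x₀ (f x₀) := by
    intro n
    induction n with
    | zero => simp [u]
    | succ n ih =>
      calc D (u (n + 1)) (u (n + 1 + 1)) ≤ k * D (u n) (u (n + 1)) := by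
            rw [hu_succ (n + 1), hu_succ n]; exact hfD _ (hu n) _ (hfS (hu n))
        _ ≤ k * (k ^ n * D x₀ (f x₀)) := mul_le_mul_of_nonneg_left ih hk₀
        _ = k ^ (n + 1) * D x₀ (f x₀) := by ring
  have hdist : ∀ n, dist (u n) (u (n + 1)) ≤ √(D x₀ (f x₀)) * √k ^ n := by
    have hD₀ : 0 ≤ D x₀ (f x₀) := (sq_nonneg _).trans (hD _ hx₀ _ (hfS hx₀))
    intro n
    rw [← pow_le_pow_iff_left₀ dist_nonneg (by positivity) two_ne_zero, mul_pow, ← pow_mul,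
      mul_comm n, pow_mul, Real.sq_sqrt hk₀, Real.sq_sqrt hD₀, mul_comm]
    exact (hD _ (hu n) _ (hu (n + 1))).trans (hDu n)
  obtain ⟨x, hx⟩ := cauchySeq_tendsto_of_complete
    (cauchySeq_of_le_geometric _ _ ((Real.sqrt_lt' one_pos).2 (by rwa [one_pow])) hdist)
  have hxS : x ∈ S := hS.mem_of_tendsto hx (Eventually.of_forall hu)
  exact ⟨x, hxS, isFixedPt_of_tendsto_iterate hx (hf x hxS)⟩

theorem eq_of_isFixedPt_of_gauge_contracting (hk : k < 1)
    (hfD : ∀ x ∈ S, ∀ y ∈ S, D (f x) (f y) ≤ k * D x y)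
    (hD : ∀ x ∈ S, ∀ y ∈ S, dist x y ^ 2 ≤ D x y) {x y : X} (hx : x ∈ S) (hy : y ∈ S)
    (hfx : IsFixedPt f x) (hfy : IsFixedPt f y) : x = y := by
  have hcontr := hfD x hx y hy
  rw [hfx.eq, hfy.eq] at hcontr
  have := hD x hx y hy
  have : dist x y ^ 2 ≤ 0 := by nlinarith
  exact dist_le_zero.1 ((sq_nonpos_iff _).1 this).le

end Gauge

open Complex in
/-- For the hyperbolic distance `d` of the half-plane `a < im`, this is `4 sinh² (d / 2)`. -/
noncomputable def halfPlaneGauge (a : ℝ) (z w : ℂ) : ℝ :=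
  normSq (z - w) / ((z.im - a) * (w.im - a))

theorem sq_dist_le_mul_halfPlaneGauge {a M : ℝ} {z w : ℂ} (hz : z.im ∈ Ioc a M)
    (hw : w.im ∈ Ioc a M) : dist z w ^ 2 ≤ (M - a) ^ 2 * halfPlaneGauge a z w := by
  have hza : 0 < z.im - a := sub_pos.2 hz.1
  have hwa : 0 < w.im - a := sub_pos.2 hw.1
  rw [halfPlaneGauge, Complex.dist_eq, Complex.sq_norm, mul_div_assoc',
    le_div_iff₀ (mul_pos hza hwa), mul_comm _ (Complex.normSq _)]
  refine mul_le_mul_of_nonneg_left ?_ (Complex.normSq_nonneg _)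
  nlinarith [hz.2, hw.2]

open Complex in
noncomputable def tanMap (t : ℝ) (θ : ℂ) (z : ℂ) : ℂ := θ + t * tan z

section TanMap

open Complex

variable {t : ℝ} {θ z : ℂ}

theorem isFixedPt_tanMap_iff : IsFixedPt (tanMap t θ) z ↔ z - t * tan z = θ := by
  rw [IsFixedPt, tanMap, sub_eq_iff_eq_add, eq_comm]

theorem tanMap_im : (tanMap t θ z).im = θ.im + t * (tan z).im := by
  simp [tanMap]

theorem tanMap_sub_tanMap (w : ℂ) : tanMap t θ z - tanMap t θ w = t * (tan z - tan w) := by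
  simp only [tanMap]; ring

theorem le_tanMap_im (ht : 0 ≤ t) (hz : 0 < z.im) (hθz : θ.im ≤ z.im) :
    θ.im + t * Real.tanh θ.im ≤ (tanMap t θ z).im := by
  rw [tanMap_im]
  gcongr
  exact (Real.tanh_strictMono.monotone hθz).trans (tanh_im_le_tan_im hz)

theorem tanMap_im_le (ht : 0 ≤ t) {b : ℝ} (hb : 0 < b) (hbz : b ≤ z.im) :
    (tanMap t θ z).im ≤ θ.im + t / Real.tanh b := by
  rw [tanMap_im, div_eq_mul_inv]
  gcongr
  exact (tan_im_le_inv_tanh_im (hb.trans_le hbz)).trans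
    (inv_anti₀ (Real.tanh_pos hb) (Real.tanh_strictMono.monotone hbz))

theorem halfPlaneGauge_tanMap_le (ht : 0 < t) (hθ : 0 ≤ θ.im) {b : ℝ} (hb : θ.im < b) {w : ℂ}
    (hz : b ≤ z.im) (hw : b ≤ w.im) :
    halfPlaneGauge θ.im (tanMap t θ z) (tanMap t θ w) ≤
      (Real.cosh b)⁻¹ * halfPlaneGauge θ.im z w := by
  have tan_im_pos : ∀ {z : ℂ}, b ≤ z.im → 0 < (tan z).im := fun hz =>
    (Real.tanh_pos (hθ.trans_lt (hb.trans_le hz))).trans_le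
      (tanh_im_le_tan_im (hθ.trans_lt (hb.trans_le hz)))
  have hz' := tan_im_pos hz
  have hw' := tan_im_pos hw
  have hza : 0 < z.im - θ.im := by linarith
  have hwa : 0 < w.im - θ.im := by linarith
  rw [halfPlaneGauge, halfPlaneGauge, tanMap_sub_tanMap, tanMap_im, tanMap_im,
    add_sub_cancel_left, add_sub_cancel_left, normSq_mul, normSq_ofReal]
  calc t * t * normSq (tan z - tan w) / (t * (tan z).im * (t * (tan w).im))
      = normSq (tan z - tan w) / ((tan z).im * (tan w).im) := by field_simp
    _ ≤ (Real.cosh b)⁻¹ * (normSq (z - w) / ((z.im - θ.im) * (w.im - θ.im))) := by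
      rw [inv_mul_eq_div, div_div, div_le_div_iff₀ (by positivity) (by positivity)]
      simpa only [mul_assoc] using normSq_tan_sub_mul_le hθ hb hz hw

theorem continuousAt_tanMap (hz : z.im ≠ 0) : ContinuousAt (tanMap t θ) z :=
  continuousAt_const.add
    (continuousAt_const.mul (continuousAt_tan.2 (cos_ne_zero_of_im_ne_zero hz)))

theorem mapsTo_tanMap (ht : 0 ≤ t) {b M : ℝ} (hb₀ : 0 < b) (hθb : θ.im ≤ b)
    (hb : b ≤ θ.im + t * Real.tanh θ.im) (hM : θ.im + t / Real.tanh b ≤ M) :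
    MapsTo (tanMap t θ) (im ⁻¹' Icc b M) (im ⁻¹' Icc b M) := fun _ hz =>
  ⟨hb.trans (le_tanMap_im ht (hb₀.trans_le hz.1) (hθb.trans hz.1)),
    (tanMap_im_le ht hb₀ hz.1).trans hM⟩

theorem mem_of_isFixedPt_tanMap (ht : 0 ≤ t) {b M : ℝ} (hb₀ : 0 < b)
    (hb : b ≤ θ.im + t * Real.tanh θ.im) (hM : θ.im + t / Real.tanh b ≤ M) (hz : 0 < z.im)
    (hfix : IsFixedPt (tanMap t θ) z) : z ∈ im ⁻¹' Icc b M := by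
  have him : z.im = θ.im + t * (tan z).im := by rw [← tanMap_im, hfix.eq]
  have hθz : θ.im ≤ z.im := by
    rw [him]
    exact le_add_of_nonneg_right
      (mul_nonneg ht ((Real.tanh_pos hz).le.trans (tanh_im_le_tan_im hz)))
  have hbz : b ≤ z.im := hb.trans (hfix.eq ▸ le_tanMap_im ht hz hθz)
  exact ⟨hbz, (hfix.eq ▸ tanMap_im_le ht hb₀ hbz).trans hM⟩

theorem existsUnique_isFixedPt_tanMap (ht : 0 < t) (hθ : 0 < θ.im) :
    ∃! ζ : ℂ, 0 < ζ.im ∧ IsFixedPt (tanMap t θ) ζ := by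
  set a := θ.im
  set b := a + t * Real.tanh a
  set M := a + t / Real.tanh b
  set S := im ⁻¹' Icc b M
  have hab : a < b := lt_add_of_pos_right a (mul_pos ht (Real.tanh_pos hθ))
  have hb : 0 < b := hθ.trans hab
  have hbM : b ≤ M := by
    have : Real.tanh a ≤ 1 / Real.tanh b :=
      (Real.tanh_lt_one a).le.trans (one_le_one_div (Real.tanh_pos hb) (Real.tanh_lt_one b).le)
    show a + t * Real.tanh a ≤ a + t / Real.tanh b
    rw [div_eq_mul_one_div]
    gcongr
  set D : ℂ → ℂ → ℝ := fun z w => (M - a) ^ 2 * halfPlaneGauge a z w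
  have hfD : ∀ z ∈ S, ∀ w ∈ S, D (tanMap t θ z) (tanMap t θ w) ≤ (Real.cosh b)⁻¹ * D z w :=
    fun z hz w hw => by
      simpa only [D, mul_left_comm _ (Real.cosh b)⁻¹] using mul_le_mul_of_nonneg_left
        (halfPlaneGauge_tanMap_le ht hθ.le hab hz.1 hw.1) (sq_nonneg (M - a))
  have hD : ∀ z ∈ S, ∀ w ∈ S, dist z w ^ 2 ≤ D z w := fun z hz w hw =>
    sq_dist_le_mul_halfPlaneGauge ⟨hab.trans_le hz.1, hz.2⟩ ⟨hab.trans_le hw.1, hw.2⟩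
  have hk : (Real.cosh b)⁻¹ < 1 := inv_lt_one_of_one_lt₀ (Real.one_lt_cosh.2 hb.ne')
  obtain ⟨ζ, hζS, hζ⟩ := exists_isFixedPt_of_gauge_contracting
    (isClosed_Icc.preimage continuous_im) (mapsTo_tanMap ht.le hb hab.le le_rfl le_rfl)
    (fun z hz => continuousAt_tanMap (hb.trans_le hz.1).ne')
    (inv_nonneg.2 (Real.cosh_pos b).le) hk hfD hD (x₀ := b * I) (by simpa [S] using hbM)
  refine ⟨ζ, ⟨hb.trans_le hζS.1, hζ⟩, fun ξ hξ => ?_⟩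
  exact eq_of_isFixedPt_of_gauge_contracting hk hfD hD
    (mem_of_isFixedPt_tanMap ht.le hb le_rfl le_rfl hξ.1 hξ.2) hζS hξ.2 hζ

theorem cos_sq_ne_of_isFixedPt_tanMap (ht : 0 < t) (hθ : 0 < θ.im) (hz : 0 < z.im)
    (hfix : IsFixedPt (tanMap t θ) z) : cos z ^ 2 ≠ t := by
  intro hcos
  have hN : normSq (cos z) = t := by
    rw [normSq_eq_norm_sq, ← norm_pow, hcos, norm_real, Real.norm_of_nonneg ht.le]
  have him : z.im = θ.im + t * (tan z).im := by rw [← tanMap_im, hfix.eq]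
  rw [tan_im, hN, mul_div_cancel₀ _ ht.ne'] at him
  have := Real.self_le_sinh_iff.2 hz.le
  nlinarith [Real.one_le_cosh z.im]

end TanMap

theorem stmt9 (t : ℝ) (ht : 0 < t) (θ : ℂ) (hθ : 0 < θ.im) :
    (∃! ζ : ℂ, 0 < ζ.im ∧ ζ - t * Complex.tan ζ = θ) ∧
    (∀ ζ : ℂ, 0 < ζ.im → ζ - t * Complex.tan ζ = θ → (Complex.cos ζ) ^ 2 ≠ (t : ℂ)) := by
  simp_rw [← isFixedPt_tanMap_iff]
  exact ⟨existsUnique_isFixedPt_tanMap ht hθ, fun _ => cos_sq_ne_of_isFixedPt_tanMap ht hθ⟩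
end

section
/- Fix t > 0. If θ ∈ ℍ and ζ ∈ ℍ satisfy ζ − t·tan ζ = θ, then Im ζ > Im θ. In particular the principal branch ζ_t maps ℍ into ℍ (it is a Nevanlinna function). -/
theorem stmt11 (t : ℝ) (ht : 0 < t) (θ ζ : ℂ) (hθ : 0 < θ.im) (hζ : 0 < ζ.im)
    (heq : ζ - t * Complex.tan ζ = θ) : θ.im < ζ.im := by
  have hcos : Complex.cos ζ ≠ 0 := by
    intro h
    rw [Complex.cos_eq_zero_iff] at h
    obtain ⟨k, hk⟩ := h
    have : ζ.im = 0 := by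
      rw [hk]
      simp [Complex.div_im]
    linarith
  have hnormSq : 0 < Complex.normSq (Complex.cos ζ) := by
    simpa [Complex.normSq_pos] using hcos
  have htan : 0 < (Complex.tan ζ).im := by
    rw [Complex.tan_eq_sin_div_cos, Complex.div_im]
    have hs : Complex.sin ζ = (Real.sin ζ.re * Real.cosh ζ.im : ℝ) +
        (Real.cos ζ.re * Real.sinh ζ.im : ℝ) * Complex.I := by
      rw [Complex.sin_eq]; push_cast; ring
    have hc : Complex.cos ζ = (Real.cos ζ.re * Real.cosh ζ.im : ℝ) -
        (Real.sin ζ.re * Real.sinh ζ.im : ℝ) * Complex.I := by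
      rw [Complex.cos_eq]; push_cast; ring
    have key : (Complex.sin ζ).im * (Complex.cos ζ).re -
        (Complex.sin ζ).re * (Complex.cos ζ).im
        = Real.sinh ζ.im * Real.cosh ζ.im := by
      rw [hs, hc]
      simp [Complex.add_im, Complex.sub_im, Complex.mul_im, Complex.add_re, Complex.sub_re,
        Complex.cos_ofReal_re, Complex.sin_ofReal_re, Complex.sinh_ofReal_re]
      linear_combination (Real.sinh ζ.im * Real.cosh ζ.im) * Real.sin_sq_add_cos_sq ζ.re
    have hpos : 0 < Real.sinh ζ.im * Real.cosh ζ.im :=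
      mul_pos (Real.sinh_pos_iff.2 hζ) (Real.cosh_pos _)
    have : 0 < ((Complex.sin ζ).im * (Complex.cos ζ).re -
        (Complex.sin ζ).re * (Complex.cos ζ).im) / Complex.normSq (Complex.cos ζ) := by
      exact div_pos (key ▸ hpos) hnormSq
    rw [sub_div] at this
    linarith
  have him : ζ.im - t * (Complex.tan ζ).im = θ.im := by
    have := congrArg Complex.im heq
    simpa [Complex.sub_im, Complex.mul_im] using this
  nlinarith
end

section
/- Fix t > 0 and θ ∈ ℂ with Im θ > 0, and define f_θ : ℍ → ℍ by f_θ(x) = θ + t·tan x. Let ζ ∈ ℍ be the unique fixed point of f_θ in ℍ (i.e. the unique ζ ∈ ℍ with ζ − t·tan ζ = θ). Then the iterates f_θ^{∘n}(x) converge to ζ as n → ∞, locally uniformly in x ∈ ℍ (in particular, the limit does not depend on the starting point x ∈ ℍ). -/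
/-!
Writing `E z = exp (2 i z)` and `cayley w = -i (w - 1) / (w + 1)`, one has `tan = cayley ∘ E`, so
`f = g ∘ E` with `g w = θ + t · cayley w`, and `f` is semiconjugate to the self-map `F = E ∘ g` of the
unit disc. Since `cayley` maps the disc into the closed upper half-plane, `F` maps the disc into the
closed disc of radius `s = exp (-2 Im θ) < 1`, which has pseudo-hyperbolic diameter at most
`ρ = 2s / (1 + s²) < 1`. The Schwarz lemma, applied after moving the fixed point `E ζ` to `0` by a disc
automorphism, makes `F` a `ρ`-contraction towards `E ζ`, and `g` is Lipschitz on the small disc. Hence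
`f^[n] x → ζ` geometrically fast, uniformly on the whole upper half-plane.
-/

open Complex ComplexConjugate Metric Set Filter Function Topology

noncomputable section

def mobius (b z : ℂ) : ℂ := (b - z) / (1 - conj b * z)

lemma normSq_one_sub_conj_mul_sub_normSq_sub (b z : ℂ) :
    normSq (1 - conj b * z) - normSq (b - z) = (1 - normSq b) * (1 - normSq z) := by
  simp only [normSq_apply, sub_re, sub_im, mul_re, mul_im, one_re, one_im, conj_re, conj_im]
  ring

lemma one_sub_conj_mul_ne_zero {b z : ℂ} (hb : ‖b‖ < 1) (hz : ‖z‖ ≤ 1) :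
    1 - conj b * z ≠ 0 := by
  rw [sub_ne_zero]
  intro h
  have : ‖conj b * z‖ < 1 := by
    rw [norm_mul, norm_conj]
    nlinarith [norm_nonneg b, norm_nonneg z]
  simp [← h] at this

lemma mobius_self (b : ℂ) : mobius b b = 0 := by simp [mobius]

lemma mobius_zero (b : ℂ) : mobius b 0 = b := by simp [mobius]

lemma mobius_mobius {b z : ℂ} (hb : ‖b‖ < 1) (hz : ‖z‖ ≤ 1) : mobius b (mobius b z) = z := by
  have hz' := one_sub_conj_mul_ne_zero hb hz
  have hb' := one_sub_conj_mul_ne_zero hb hb.le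
  have hnum : b - mobius b z = z * (1 - conj b * b) / (1 - conj b * z) := by
    rw [mobius, eq_div_iff hz', sub_mul, div_mul_cancel₀ _ hz']; ring
  have hden : 1 - conj b * mobius b z = (1 - conj b * b) / (1 - conj b * z) := by
    rw [mobius, eq_div_iff hz', sub_mul, mul_assoc, div_mul_cancel₀ _ hz']; ring
  rw [mobius, hnum, hden, div_div_div_cancel_right₀ hz', mul_div_assoc, div_self hb', mul_one]

lemma norm_mobius_lt_one {b z : ℂ} (hb : ‖b‖ < 1) (hz : ‖z‖ < 1) : ‖mobius b z‖ < 1 := by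
  have hd := one_sub_conj_mul_ne_zero hb hz.le
  rw [mobius, norm_div, div_lt_one (norm_pos_iff.2 hd),
    ← sq_lt_sq₀ (norm_nonneg _) (norm_nonneg _), Complex.sq_norm, Complex.sq_norm]
  have hb2 : normSq b < 1 := by rw [← Complex.sq_norm]; nlinarith [norm_nonneg b]
  have hz2 : normSq z < 1 := by rw [← Complex.sq_norm]; nlinarith [norm_nonneg z]
  nlinarith [normSq_one_sub_conj_mul_sub_normSq_sub b z, mul_pos (sub_pos.2 hb2) (sub_pos.2 hz2)]

lemma norm_mobius_le {b z : ℂ} {s : ℝ} (hs : s < 1) (hb : ‖b‖ ≤ s) (hz : ‖z‖ ≤ s) :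
    ‖mobius b z‖ ≤ 2 * s / (1 + s ^ 2) := by
  have hs0 : 0 ≤ s := (norm_nonneg b).trans hb
  have hd := one_sub_conj_mul_ne_zero (hb.trans_lt hs) (hz.trans hs.le)
  have hb2 : normSq b ≤ s ^ 2 := by rw [← Complex.sq_norm]; gcongr
  have hz2 : normSq z ≤ s ^ 2 := by rw [← Complex.sq_norm]; gcongr
  have hD : normSq (1 - conj b * z) ≤ (1 + s ^ 2) ^ 2 := by
    rw [← Complex.sq_norm]
    gcongr
    calc ‖1 - conj b * z‖ ≤ ‖(1 : ℂ)‖ + ‖conj b * z‖ := norm_sub_le _ _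
      _ ≤ 1 + s ^ 2 := by rw [norm_one, norm_mul, norm_conj, sq]; gcongr
  have hP : (1 - s ^ 2) ^ 2 ≤ (1 - normSq b) * (1 - normSq z) := by
    rw [sq]; gcongr <;> nlinarith
  rw [mobius, norm_div, div_le_iff₀ (norm_pos_iff.2 hd), ← pow_le_pow_iff_left₀ (norm_nonneg _)
    (by positivity) two_ne_zero, mul_pow, Complex.sq_norm, Complex.sq_norm, div_pow,
    div_mul_eq_mul_div, le_div_iff₀ (by positivity)]
  nlinarith [normSq_one_sub_conj_mul_sub_normSq_sub b z, mul_le_mul_of_nonneg_left hD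
    (sq_nonneg (1 - s ^ 2))]

lemma norm_sub_le_two_mul_norm_mobius {b z : ℂ} (hb : ‖b‖ < 1) (hz : ‖z‖ ≤ 1) :
    ‖z - b‖ ≤ 2 * ‖mobius b z‖ := by
  have hd := one_sub_conj_mul_ne_zero hb hz
  have hd2 : ‖1 - conj b * z‖ ≤ 2 :=
    calc ‖1 - conj b * z‖ ≤ ‖(1 : ℂ)‖ + ‖conj b * z‖ := norm_sub_le _ _
      _ ≤ 1 + 1 := by rw [norm_one, norm_mul, norm_conj]; gcongr; nlinarith [norm_nonneg b]
      _ = 2 := by norm_num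
  calc ‖z - b‖ = ‖1 - conj b * z‖ * ‖mobius b z‖ := by
        rw [mobius, ← norm_mul, mul_div_cancel₀ _ hd, norm_sub_rev]
    _ ≤ 2 * ‖mobius b z‖ := by gcongr

lemma differentiableOn_mobius {b : ℂ} (hb : ‖b‖ < 1) :
    DifferentiableOn ℂ (mobius b) (ball 0 1) :=
  DifferentiableOn.div (by fun_prop) (by fun_prop) fun z hz =>
    one_sub_conj_mul_ne_zero hb (mem_ball_zero_iff.1 hz).le

lemma two_mul_div_one_add_sq_lt_one {s : ℝ} (hs : s < 1) : 2 * s / (1 + s ^ 2) < 1 := by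
  rw [div_lt_one (by positivity)]
  nlinarith [sq_pos_of_pos (sub_pos.2 hs)]

section SelfMapOfDisc

variable {F : ℂ → ℂ} {s : ℝ} {b : ℂ} (hd : DifferentiableOn ℂ F (ball 0 1))
  (hmaps : MapsTo F (ball 0 1) (closedBall 0 s)) (hs : s < 1) (hb : ‖b‖ < 1) (hfix : F b = b)
include hd hmaps hs hb hfix

lemma norm_mobius_apply_le {z : ℂ} (hz : ‖z‖ < 1) :
    ‖mobius b (F z)‖ ≤ 2 * s / (1 + s ^ 2) * ‖mobius b z‖ := by
  have hball : MapsTo (mobius b) (ball 0 1) (ball 0 1) := fun u hu =>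
    mem_ball_zero_iff.2 (norm_mobius_lt_one hb (mem_ball_zero_iff.1 hu))
  have hbs : ‖b‖ ≤ s := by simpa [hfix] using hmaps (mem_ball_zero_iff.2 hb)
  set H := mobius b ∘ F ∘ mobius b
  have hH0 : H 0 = 0 := by simp [H, mobius_zero, hfix, mobius_self]
  have hHd : DifferentiableOn ℂ H (ball 0 1) :=
    (differentiableOn_mobius hb).comp (hd.comp (differentiableOn_mobius hb) hball)
      fun u hu => closedBall_subset_ball hs (hmaps (hball hu))
  have hHmaps : MapsTo H (ball 0 1) (closedBall (H 0) (2 * s / (1 + s ^ 2))) := fun u hu => by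
    rw [hH0, mem_closedBall_zero_iff]
    exact norm_mobius_le hs hbs (mem_closedBall_zero_iff.1 (hmaps (hball hu)))
  simpa [H, mobius_zero, hfix, mobius_self, mobius_mobius hb hz.le] using
    dist_le_div_mul_dist_of_mapsTo_ball hHd hHmaps (hball (mem_ball_zero_iff.2 hz))

theorem norm_iterate_sub_fixedPoint_le {w : ℂ} (hw : ‖w‖ < 1) (n : ℕ) :
    ‖F^[n] w - b‖ ≤ 2 * (2 * s / (1 + s ^ 2)) ^ n := by
  have hs0 : 0 ≤ s := (norm_nonneg _).trans (by simpa [hfix] using hmaps (mem_ball_zero_iff.2 hb))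
  have hmem : ∀ n, ‖F^[n] w‖ < 1 := fun n => mem_ball_zero_iff.1 <|
    (hmaps.mono_right (closedBall_subset_ball hs)).iterate n (mem_ball_zero_iff.2 hw)
  have horbit : ∀ n, ‖mobius b (F^[n] w)‖ ≤ (2 * s / (1 + s ^ 2)) ^ n := by
    intro n
    induction n with
    | zero => simpa using (norm_mobius_lt_one hb hw).le
    | succ n ih =>
      rw [iterate_succ_apply', pow_succ']
      exact (norm_mobius_apply_le hd hmaps hs hb hfix (hmem n)).trans (by gcongr)
  calc ‖F^[n] w - b‖ ≤ 2 * ‖mobius b (F^[n] w)‖ := norm_sub_le_two_mul_norm_mobius hb (hmem n).le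
    _ ≤ 2 * (2 * s / (1 + s ^ 2)) ^ n := by gcongr; exact horbit n

end SelfMapOfDisc

def cayley (w : ℂ) : ℂ := -I * ((w - 1) / (w + 1))

-- Holds on all of `ℂ`: where `cos z = 0`, i.e. `exp (2 i z) = -1`, both sides are `0` by `x / 0 = 0`.
lemma tan_eq_cayley_exp (z : ℂ) : tan z = cayley (exp (2 * I * z)) := by
  have h : exp (2 * I * z) = exp (z * I) * exp (z * I) := by rw [← exp_add]; ring_nf
  rw [tan, sin, cos, cayley, h, neg_mul, exp_neg, ← mul_div_mul_right _ _ (exp_ne_zero (z * I))]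
  set a := exp (z * I)
  have ha : a ≠ 0 := exp_ne_zero _
  have hnum : (a⁻¹ - a) * I / 2 * a = -I * (a * a - 1) / 2 := by field_simp; ring
  have hden : (a + a⁻¹) / 2 * a = (a * a + 1) / 2 := by field_simp
  rw [hnum, hden, div_div_div_cancel_right₀ two_ne_zero, mul_div_assoc]

lemma im_cayley_nonneg {w : ℂ} (hw : ‖w‖ ≤ 1) : 0 ≤ (cayley w).im := by
  have hw2 : normSq w ≤ 1 := by rw [← Complex.sq_norm]; nlinarith [norm_nonneg w]
  have hre : ((w - 1) / (w + 1)).re = (normSq w - 1) / normSq (w + 1) := by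
    rw [div_re, ← add_div]
    congr 1
    simp only [normSq_apply, sub_re, sub_im, add_re, add_im, one_re, one_im]
    ring
  simp only [cayley, neg_mul, neg_im, I_mul_im, hre, neg_nonneg]
  exact div_nonpos_of_nonpos_of_nonneg (by linarith) (normSq_nonneg _)

lemma differentiableOn_cayley : DifferentiableOn ℂ cayley (ball 0 1) :=
  DifferentiableOn.const_mul (DifferentiableOn.div (by fun_prop) (by fun_prop) fun w hw h => by
    simp [eq_neg_of_add_eq_zero_left h] at hw) _

lemma cayley_sub_cayley {u v : ℂ} (hu : u + 1 ≠ 0) (hv : v + 1 ≠ 0) :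
    cayley u - cayley v = -2 * I * (u - v) / ((u + 1) * (v + 1)) := by
  unfold cayley
  field_simp
  ring

lemma norm_cayley_sub_le {u v : ℂ} {s : ℝ} (hs : s < 1) (hu : ‖u‖ ≤ s) (hv : ‖v‖ ≤ s) :
    ‖cayley u - cayley v‖ ≤ 2 / (1 - s) ^ 2 * ‖u - v‖ := by
  have hlow : ∀ {w : ℂ}, ‖w‖ ≤ s → 1 - s ≤ ‖w + 1‖ := fun {w} hw => by
    have := norm_sub_norm_le (1 : ℂ) (-w)
    rw [norm_one, norm_neg, sub_neg_eq_add, add_comm] at this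
    linarith
  have hu1 : u + 1 ≠ 0 := norm_pos_iff.1 ((sub_pos.2 hs).trans_le (hlow hu))
  have hv1 : v + 1 ≠ 0 := norm_pos_iff.1 ((sub_pos.2 hs).trans_le (hlow hv))
  rw [cayley_sub_cayley hu1 hv1, norm_div, norm_mul, norm_mul, norm_mul, norm_neg, norm_I,
    RCLike.norm_ofNat, mul_one, div_mul_eq_mul_div, sq]
  gcongr
  · exact hlow hu
  · exact hlow hv

lemma norm_exp_two_mul_I_mul (z : ℂ) : ‖exp (2 * I * z)‖ = Real.exp (-(2 * z.im)) := by
  simp [norm_exp]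

lemma norm_exp_two_mul_I_mul_add_mul_cayley_le {t : ℝ} (ht : 0 ≤ t) (θ : ℂ) {w : ℂ}
    (hw : ‖w‖ ≤ 1) : ‖exp (2 * I * (θ + t * cayley w))‖ ≤ Real.exp (-(2 * θ.im)) := by
  rw [norm_exp_two_mul_I_mul, Real.exp_le_exp, neg_le_neg_iff, add_im, im_ofReal_mul]
  nlinarith [im_cayley_nonneg hw]

lemma iterate_succ_comp_apply {α β : Type*} (g : β → α) (e : α → β) (n : ℕ) (x : α) :
    (g ∘ e)^[n + 1] x = g ((e ∘ g)^[n] (e x)) := by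
  rw [iterate_succ_apply]
  exact (Semiconj.iterate_right (f := g) (ga := e ∘ g) (gb := g ∘ e) (fun _ => rfl) n (e x)).symm

theorem dist_iterate_semiconj_le {g E : ℂ → ℂ} {s K : ℝ}
    (hd : DifferentiableOn ℂ (E ∘ g) (ball 0 1)) (hmaps : MapsTo (E ∘ g) (ball 0 1) (closedBall 0 s))
    (hs : s < 1) (hK : 0 ≤ K) (hlip : ∀ u v, ‖u‖ ≤ s → ‖v‖ ≤ s → ‖g u - g v‖ ≤ K * ‖u - v‖)
    {b : ℂ} (hb : ‖b‖ < 1) (hfix : (E ∘ g) b = b) {x : ℂ} (hx : ‖E x‖ < 1) (n : ℕ) :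
    dist (g b) ((g ∘ E)^[n + 2] x) ≤ 2 * K * (2 * s / (1 + s ^ 2)) ^ n := by
  have hbs : ‖b‖ ≤ s := mem_closedBall_zero_iff.1 (hfix ▸ hmaps (mem_ball_zero_iff.2 hb))
  have hw : (E ∘ g) (E x) ∈ closedBall 0 s := hmaps (mem_ball_zero_iff.2 hx)
  have hu := mem_closedBall_zero_iff.1 ((hmaps.mono_left (closedBall_subset_ball hs)).iterate n hw)
  rw [iterate_succ_comp_apply, iterate_succ_apply, dist_comm, dist_eq_norm]
  calc ‖g ((E ∘ g)^[n] ((E ∘ g) (E x))) - g b‖ ≤ K * ‖(E ∘ g)^[n] ((E ∘ g) (E x)) - b‖ :=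
        hlip _ _ hu hbs
    _ ≤ K * (2 * (2 * s / (1 + s ^ 2)) ^ n) := by
        gcongr
        exact norm_iterate_sub_fixedPoint_le hd hmaps hs hb hfix
          (mem_ball_zero_iff.1 (closedBall_subset_ball hs hw)) n
    _ = 2 * K * (2 * s / (1 + s ^ 2)) ^ n := by ring

lemma tendstoUniformlyOn_of_dist_le_geometric {α β : Type*} [PseudoMetricSpace β]
    {G : ℕ → α → β} {f : α → β} {S : Set α} {C r : ℝ} (hr0 : 0 ≤ r) (hr : r < 1) (k : ℕ)
    (h : ∀ n, ∀ x ∈ S, dist (f x) (G (n + k) x) ≤ C * r ^ n) : TendstoUniformlyOn G f atTop S := by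
  have hlim : Tendsto (fun n => C * r ^ n) atTop (𝓝 0) := by
    simpa using (tendsto_pow_atTop_nhds_zero_of_lt_one hr0 hr).const_mul C
  rw [Metric.tendstoUniformlyOn_iff]
  intro ε hε
  obtain ⟨N, hN⟩ := eventually_atTop.1 (hlim.eventually (gt_mem_nhds hε))
  filter_upwards [eventually_ge_atTop (N + k)] with n hn x hx
  obtain ⟨m, rfl⟩ := Nat.exists_eq_add_of_le' (le_of_add_le_right hn)
  exact (h m x hx).trans_lt (hN m (by omega))

theorem stmt13 (t : ℝ) (ht : 0 < t) (θ : ℂ) (hθ : 0 < θ.im) (ζ : ℂ) (hζ : 0 < ζ.im)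
    (heq : ζ - t * Complex.tan ζ = θ) :
    TendstoLocallyUniformlyOn
      (fun (n : ℕ) (x : ℂ) => (fun x : ℂ => θ + t * Complex.tan x)^[n] x)
      (fun _ => ζ) Filter.atTop {x : ℂ | 0 < x.im} := by
  set g : ℂ → ℂ := fun w => θ + t * cayley w
  set E : ℂ → ℂ := fun z => exp (2 * I * z)
  set s := Real.exp (-(2 * θ.im))
  have hs : s < 1 := Real.exp_lt_one_iff.2 (by linarith)
  have hE : ∀ {z : ℂ}, 0 < z.im → ‖E z‖ < 1 := fun hz => by
    rw [norm_exp_two_mul_I_mul, Real.exp_lt_one_iff]; linarith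
  have hmaps : MapsTo (E ∘ g) (ball 0 1) (closedBall 0 s) := fun w hw =>
    mem_closedBall_zero_iff.2 <|
      norm_exp_two_mul_I_mul_add_mul_cayley_le ht.le θ (mem_ball_zero_iff.1 hw).le
  have hd : DifferentiableOn ℂ (E ∘ g) (ball 0 1) :=
    ((differentiableOn_cayley.const_mul _).const_add _ |>.const_mul _).cexp
  have hgζ : g (E ζ) = ζ := by simp only [g, E, ← tan_eq_cayley_exp]; linear_combination -heq
  have hfix : (E ∘ g) (E ζ) = E ζ := by rw [comp_apply, hgζ]
  have hlip : ∀ u v, ‖u‖ ≤ s → ‖v‖ ≤ s → ‖g u - g v‖ ≤ t * (2 / (1 - s) ^ 2) * ‖u - v‖ :=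
    fun u v hu hv => by
      rw [add_sub_add_left_eq_sub, ← mul_sub, norm_mul, norm_real, Real.norm_of_nonneg ht.le,
        mul_assoc]
      gcongr
      exact norm_cayley_sub_le hs hu hv
  have hbound : ∀ n, ∀ x ∈ {x : ℂ | 0 < x.im},
      dist ζ ((g ∘ E)^[n + 2] x) ≤ 2 * (t * (2 / (1 - s) ^ 2)) * (2 * s / (1 + s ^ 2)) ^ n :=
    fun n x hx => hgζ ▸ dist_iterate_semiconj_le hd hmaps hs (by positivity) hlip (hE hζ) hfix
      (hE hx) n
  have hf : (fun x : ℂ => θ + t * tan x) = g ∘ E := funext fun x => by simp [g, E, tan_eq_cayley_exp]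
  rw [hf]
  exact (tendstoUniformlyOn_of_dist_le_geometric (by positivity) (two_mul_div_one_add_sq_lt_one hs)
    2 hbound).tendstoLocallyUniformlyOn
end
end

section
/- Let U ⊆ ℂ be an open set and let (h_n)_{n∈ℕ} be a sequence of functions analytic on U. If the real parts Re h_n converge to 0 locally uniformly on U, then the derivatives h_n' converge to 0 locally uniformly on U. -/
/-!
By Borel–Carathéodory, a one-sided bound `Re f ≤ Re f(c) + M` on a disc `B(c, R)` bounds
`‖f - f(c)‖` by `2M` on the half-size disc, and then Cauchy's estimate bounds `‖f'(c)‖` by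
`4M / R`. If `|Re hₙ| < η` on a closed `δ`-thickening of a compact `K ⊆ U`, this gives
`‖hₙ'‖ ≤ 8η / δ` on `K`.
-/

open Complex Metric Set

namespace Complex

variable {f : ℂ → ℂ} {c : ℂ} {R M : ℝ}

lemma norm_sub_le_of_re_sub_le (hM : 0 < M) (hR : 0 < R) (hf : DifferentiableOn ℂ f (ball c R))
    (hre : ∀ w ∈ ball c R, (f w).re - (f c).re ≤ M) {z : ℂ} (hz : z ∈ closedBall c (R / 2)) :
    ‖f z - f c‖ ≤ 2 * M := by
  set g : ℂ → ℂ := fun w => f (c + w) - f c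
  have hg : DifferentiableOn ℂ g (ball 0 R) := by
    refine (hf.comp (by fun_prop) fun w hw => ?_).sub_const _
    simpa using hw
  have hg_re : MapsTo g (ball 0 R) {w | w.re ≤ M} := fun w hw =>
    hre _ (by simpa using hw)
  have hzR : ‖z - c‖ ≤ R / 2 := mem_closedBall_iff_norm.mp hz
  have hBC := borelCaratheodory_zero hM hg hg_re hR (by simpa using hzR.trans_lt (half_lt_self hR))
    (by simp [g])
  simp only [g, add_sub_cancel] at hBC
  calc ‖f z - f c‖ ≤ 2 * M * ‖z - c‖ / (R - ‖z - c‖) := hBC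
    _ ≤ 2 * M := by
      rw [div_le_iff₀ (by linarith)]
      nlinarith

lemma norm_deriv_le_of_re_sub_le (hM : 0 < M) (hR : 0 < R) (hf : DifferentiableOn ℂ f (ball c R))
    (hre : ∀ w ∈ ball c R, (f w).re - (f c).re ≤ M) :
    ‖deriv f c‖ ≤ 4 * M / R := by
  have hcl : DiffContOnCl ℂ (fun z => f z - f c) (ball c (R / 2)) := by
    refine DifferentiableOn.diffContOnCl ((hf.sub_const _).mono ?_)
    rw [closure_ball c (half_pos hR).ne']
    exact closedBall_subset_ball (half_lt_self hR)
  have hCauchy := norm_deriv_le_of_forall_mem_sphere_norm_le (half_pos hR) hcl fun z hz =>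
    norm_sub_le_of_re_sub_le hM hR hf hre (sphere_subset_closedBall hz)
  rw [deriv_sub_const] at hCauchy
  calc ‖deriv f c‖ ≤ 2 * M / (R / 2) := hCauchy
    _ = 4 * M / R := by field_simp; ring

end Complex

theorem stmt19 (U : Set ℂ) (hU : IsOpen U) (h : ℕ → ℂ → ℂ)
    (hd : ∀ n : ℕ, DifferentiableOn ℂ (h n) U)
    (hre : TendstoLocallyUniformlyOn (fun (n : ℕ) (z : ℂ) => (h n z).re)
      (fun _ => 0) Filter.atTop U) :
    TendstoLocallyUniformlyOn (fun (n : ℕ) (z : ℂ) => deriv (h n) z)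
      (fun _ => 0) Filter.atTop U := by
  rw [tendstoLocallyUniformlyOn_iff_forall_isCompact hU] at hre ⊢
  intro K hKU hK
  obtain ⟨δ, hδ, hKδ⟩ := hK.exists_cthickening_subset_open hU hKU
  have hre_K := Metric.tendstoUniformlyOn_iff.mp (hre _ hKδ hK.cthickening)
  refine Metric.tendstoUniformlyOn_iff.mpr fun ε hε => ?_
  filter_upwards [hre_K (ε * δ / 16) (by positivity)] with n hn z hz
  have hball : ball z δ ⊆ cthickening δ K :=
    ball_subset_closedBall.trans (closedBall_subset_cthickening hz δ)
  have habs : ∀ w ∈ ball z δ, |(h n w).re| < ε * δ / 16 := fun w hw => by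
    simpa using hn w (hball hw)
  have hderiv := Complex.norm_deriv_le_of_re_sub_le (M := ε * δ / 8) (by positivity) hδ
    ((hd n).mono (hball.trans hKδ)) fun w hw => by
      linarith [abs_lt.mp (habs w hw), abs_lt.mp (habs z (mem_ball_self hδ))]
  calc dist 0 (deriv (h n) z) = ‖deriv (h n) z‖ := dist_zero_left _
    _ ≤ 4 * (ε * δ / 8) / δ := hderiv
    _ < ε := by field_simp; linarith
end
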